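/- arXiv:2105.03927 — 5 statements merged into one kernel-verified Lean document; each statement's English description precedes it below -/
import Mathlib

section
/- Let $n$ be a positive integer and $a$ a nonzero complex number. Then $\sum_{k=1}^{n} \frac{(-a)^k}{k} \sum_{j=1}^{k} \frac{1}{j} \sum_{p=1}^{j} \frac{(-1/a)^p}{p} = \sum_{p=0}^{n-1} \Big\{ \sum_{k=1}^{n-p} \Big( \frac{H_{p+k} - H_k}{(p+k)k} + \frac{1}{k^2(p+k)} \Big) \Big\} (-a)^p$. -/
/-- The `n`-th harmonic number `H_n = ∑_{k=1}^n 1/k`, with `H_0 = 0`. -/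
noncomputable def H (n : ℕ) : ℝ := ∑ i ∈ Finset.range n, (1 : ℝ) / (i + 1)

/-!
Multiplying out, the left side is the sum of `(-a)^(k-p) / (k j p)` over `1 ≤ p ≤ j ≤ k ≤ n`.
Grouping the terms by `q = k - p` and summing over `j` first, the inner sum
`∑_{j=p}^{p+q} 1/j` equals `H_{p+q} - H_p + 1/p`.
-/

open Finset

lemma H_eq_sum_Ioc (n : ℕ) : H n = ∑ j ∈ Ioc 0 n, (1 : ℝ) / j := by
  rw [← Ico_add_one_add_one_eq_Ioc, ← sum_Ico_add', H, range_eq_Ico]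
  push_cast
  rfl

lemma H_sub_H_eq_sum_Ioc {k m : ℕ} (hkm : k ≤ m) : H m - H k = ∑ j ∈ Ioc k m, (1 : ℝ) / j := by
  rw [H_eq_sum_Ioc, H_eq_sum_Ioc, ← sum_Ioc_consecutive _ k.zero_le hkm, add_sub_cancel_left]

lemma sum_Icc_inv_eq_H_sub_H_add {k m : ℕ} (hkm : k ≤ m) :
    ∑ j ∈ Icc k m, (1 : ℂ) / j = ((H m - H k : ℝ) : ℂ) + 1 / k := by
  rw [Icc_eq_cons_Ioc hkm, sum_cons, H_sub_H_eq_sum_Ioc hkm]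
  push_cast
  ring

section Reindex

variable {M : Type*} [AddCommMonoid M]

lemma sum_Icc_sum_Icc_comm (k : ℕ) (f : ℕ → ℕ → M) :
    ∑ j ∈ Icc 1 k, ∑ p ∈ Icc 1 j, f j p = ∑ p ∈ Icc 1 k, ∑ j ∈ Icc p k, f j p :=
  sum_comm' fun j p => by simp only [mem_Icc]; omega

lemma sum_Icc_sum_Icc_eq_sum_range_sum_Icc (n : ℕ) (g : ℕ → ℕ → M) :
    ∑ k ∈ Icc 1 n, ∑ p ∈ Icc 1 k, g k p = ∑ q ∈ range n, ∑ p ∈ Icc 1 (n - q), g (q + p) p := by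
  rw [sum_sigma', sum_sigma']
  refine sum_nbij' (fun x => ⟨x.1 - x.2, x.2⟩) (fun y => ⟨y.1 + y.2, y.2⟩) ?_ ?_ ?_ ?_ ?_ <;>
    rintro ⟨k, p⟩ h <;> simp only [mem_sigma, mem_Icc, mem_range] at h ⊢
  · omega
  · omega
  · rw [Nat.sub_add_cancel h.2.2]
  · rw [Nat.add_sub_cancel]
  · rw [Nat.sub_add_cancel h.2.2]

end Reindex

theorem triple_sum_identity_general (n : ℕ) (a : ℂ) (ha : a ≠ 0) :
    ∑ k ∈ Finset.Icc 1 n, (-a) ^ k / (k : ℂ) *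
        ∑ j ∈ Finset.Icc 1 k, (1 : ℂ) / (j : ℂ) *
          ∑ p ∈ Finset.Icc 1 j, (-1 / a) ^ p / (p : ℂ) =
      ∑ p ∈ Finset.range n,
        (∑ k ∈ Finset.Icc 1 (n - p),
            (((H (p + k) - H k : ℝ) : ℂ) / (((p : ℂ) + (k : ℂ)) * (k : ℂ)) +
              1 / ((k : ℂ) ^ 2 * ((p : ℂ) + (k : ℂ))))) * (-a) ^ p := by
  simp_rw [mul_sum]
  rw [sum_congr rfl fun k _ => sum_Icc_sum_Icc_comm k _, sum_Icc_sum_Icc_eq_sum_range_sum_Icc]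
  refine sum_congr rfl fun q _ => ?_
  rw [sum_mul]
  refine sum_congr rfl fun p hp => ?_
  have hp0 : (p : ℂ) ≠ 0 := Nat.cast_ne_zero.mpr (by grind)
  have hpow : (-a) ^ (q + p) * (-1 / a) ^ p = (-a) ^ q := by
    rw [pow_add, mul_assoc, ← mul_pow, show -a * (-1 / a) = 1 by field_simp, one_pow, mul_one]
  simp_rw [mul_left_comm _ (1 / (_ : ℂ))]
  rw [← sum_mul, sum_Icc_inv_eq_H_sub_H_add (by omega), div_mul_div_comm, hpow]
  push_cast
  field_simp

/-- For `n` a positive integer and `a` a nonzero complex number,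
`∑_{k=1}^n ((-a)^k/k) ∑_{j=1}^k (1/j) ∑_{p=1}^j ((-1/a)^p/p)
 = ∑_{p=0}^{n-1} { ∑_{k=1}^{n-p} ( (H_{p+k}-H_k)/((p+k)k) + 1/(k²(p+k)) ) } (-a)^p`. -/
theorem triple_sum_identity (n : ℕ) (hn : 0 < n) (a : ℂ) (ha : a ≠ 0) :
    ∑ k ∈ Finset.Icc 1 n, (-a) ^ k / (k : ℂ) *
        ∑ j ∈ Finset.Icc 1 k, (1 : ℂ) / (j : ℂ) *
          ∑ p ∈ Finset.Icc 1 j, (-1 / a) ^ p / (p : ℂ) =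
      ∑ p ∈ Finset.range n,
        (∑ k ∈ Finset.Icc 1 (n - p),
            (((H (p + k) - H k : ℝ) : ℂ) / (((p : ℂ) + (k : ℂ)) * (k : ℂ)) +
              1 / ((k : ℂ) ^ 2 * ((p : ℂ) + (k : ℂ))))) * (-a) ^ p :=
  triple_sum_identity_general n a ha
end

section
/- Let $a$ be a real number with $a \le -2$ or $a \ge 0$, and let $s$ be a positive real number. Then $\int_{0}^{1} \frac{1-x^s}{1-x} \log\Big(1 - \frac{1-x}{1+a}\Big)\, dx = \sum_{k=1}^{\infty} \frac{1}{k^2 (a+1)^k \binom{s+k}{k}} - \mathrm{Li}_2\Big(\frac{1}{a+1}\Big)$. -/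
/-!
With `t = 1 / (a + 1)` the hypothesis on `a` gives `|t| ≤ 1`, so for `0 < x < 1`
`log (1 - t (1 - x)) = -∑ tⁿ⁺¹ (1 - x)ⁿ⁺¹ / (n + 1)`, and one factor `1 - x` cancels the
denominator. The resulting terms are dominated by `(1 - x)ⁿ / (n + 1)`, whose integrals
`1 / (n + 1)²` are summable, so the series may be integrated termwise. By the Beta
integral, `∫₀¹ (1 - xˢ) (1 - x)ⁿ dx = (1 - 1 / C(s + n + 1, n + 1)) / (n + 1)`, and the two
parts of the resulting series are the two sums of the theorem.
-/

/-- The dilogarithm function `Li₂(x) = ∑_{k=1}^∞ x^k/k²`. -/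
noncomputable def Li2 (x : ℝ) : ℝ := ∑' k : ℕ, x ^ (k + 1) / ((k : ℝ) + 1) ^ 2

/-- The generalized binomial coefficient `C(s+k, k) = Γ(s+k+1)/(Γ(k+1)Γ(s+1))`. -/
noncomputable def gbinom (s : ℝ) (k : ℕ) : ℝ :=
  Real.Gamma (s + k + 1) / (Real.Gamma ((k : ℝ) + 1) * Real.Gamma (s + 1))

open MeasureTheory Set

lemma integral_one_sub_pow (n : ℕ) : ∫ x in (0 : ℝ)..1, (1 - x) ^ n = 1 / (n + 1) := by
  simp [intervalIntegral.integral_comp_sub_left (fun x : ℝ => x ^ n) 1, integral_pow]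

lemma integral_rpow_mul_one_sub_pow {s : ℝ} (hs : -1 < s) (n : ℕ) :
    ∫ x in (0 : ℝ)..1, x ^ s * (1 - x) ^ n =
      Real.Gamma (s + 1) * Real.Gamma ((n : ℝ) + 1) / Real.Gamma (s + n + 2) := by
  have hbeta := Complex.betaIntegral_eq_Gamma_mul_div ((s + 1 : ℝ) : ℂ) ((n + 1 : ℝ) : ℂ)
    (by simp; linarith) (by simp; positivity)
  have hreal : Complex.betaIntegral ((s + 1 : ℝ) : ℂ) ((n + 1 : ℝ) : ℂ) =
      ((∫ x in (0 : ℝ)..1, x ^ s * (1 - x) ^ n : ℝ) : ℂ) := by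
    rw [Complex.betaIntegral, ← intervalIntegral.integral_ofReal]
    refine intervalIntegral.integral_congr fun x hx => ?_
    have hx0 : 0 ≤ x := (uIcc_of_le (zero_le_one' ℝ) ▸ hx).1
    have hs' : ((s + 1 : ℝ) : ℂ) - 1 = (s : ℂ) := by push_cast; ring
    have hn' : ((n + 1 : ℝ) : ℂ) - 1 = (n : ℂ) := by push_cast; ring
    rw [hs', hn', Complex.cpow_natCast]
    push_cast [← Complex.ofReal_cpow hx0 s]
    ring
  rw [hreal, ← Complex.ofReal_add, add_add_add_comm, one_add_one_eq_two] at hbeta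
  simp only [Complex.Gamma_ofReal] at hbeta
  exact_mod_cast hbeta

lemma one_div_succ_mul_gbinom_succ {s : ℝ} (hs : -1 < s) (n : ℕ) :
    1 / ((n + 1) * gbinom s (n + 1)) =
      Real.Gamma (s + 1) * Real.Gamma ((n : ℝ) + 1) / Real.Gamma (s + n + 2) := by
  have hn : ((n : ℝ) + 1) ≠ 0 := by positivity
  have hΓ : Real.Gamma (s + n + 2) ≠ 0 :=
    (Real.Gamma_pos_of_pos (by linarith [n.cast_nonneg (α := ℝ)])).ne'
  rw [gbinom, Nat.cast_succ, Real.Gamma_add_one hn, ← add_assoc, add_assoc _ (1 : ℝ),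
    one_add_one_eq_two]
  field_simp

lemma integral_one_sub_rpow_mul_one_sub_pow {s : ℝ} (hs : -1 < s) (n : ℕ) :
    ∫ x in (0 : ℝ)..1, (1 - x ^ s) * (1 - x) ^ n = (1 - 1 / gbinom s (n + 1)) / (n + 1) := by
  have hcont : Continuous fun x : ℝ => (1 - x) ^ n := by fun_prop
  have hint : IntervalIntegrable (fun x : ℝ => x ^ s * (1 - x) ^ n) volume 0 1 :=
    (intervalIntegral.intervalIntegrable_rpow' hs).mul_continuousOn hcont.continuousOn
  simp_rw [sub_mul, one_mul]
  rw [intervalIntegral.integral_sub (hcont.intervalIntegrable 0 1) hint, integral_one_sub_pow,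
    integral_rpow_mul_one_sub_pow hs, ← one_div_succ_mul_gbinom_succ hs]
  field_simp

lemma hasSum_pow_div_mul_pow {t u : ℝ} (hu : u ≠ 0) (htu : |t * u| < 1) :
    HasSum (fun n : ℕ => t ^ (n + 1) / (n + 1) * u ^ n) (-Real.log (1 - t * u) / u) := by
  refine ((Real.hasSum_pow_div_log_of_abs_lt_one htu).div_const u).congr_fun fun n => ?_
  rw [mul_pow, pow_succ u]
  field_simp

lemma summable_one_div_succ_sq : Summable fun n : ℕ => 1 / ((n : ℝ) + 1) ^ 2 := by
  exact_mod_cast (summable_nat_add_iff 1).mpr (Real.summable_one_div_nat_pow.mpr one_lt_two)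

lemma summable_pow_div_succ_sq {t : ℝ} (ht : |t| ≤ 1) :
    Summable fun n : ℕ => t ^ (n + 1) / ((n : ℝ) + 1) ^ 2 := by
  refine summable_one_div_succ_sq.of_norm_bounded fun n => ?_
  rw [norm_div, norm_pow, Real.norm_eq_abs, Real.norm_of_nonneg (by positivity)]
  gcongr
  exact pow_le_one₀ (abs_nonneg t) ht

lemma abs_one_div_add_one_le_one {a : ℝ} (ha : a ≤ -2 ∨ 0 ≤ a) : |1 / (a + 1)| ≤ 1 := by
  rw [abs_div, abs_one]
  apply div_le_one_of_le₀ _ (abs_nonneg _)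
  rcases ha with ha | ha
  · rw [abs_of_neg (by linarith)]; linarith
  · rw [abs_of_pos (by linarith)]; linarith

lemma norm_one_sub_rpow_mul_one_sub_pow_le {s x : ℝ} (hs : 0 ≤ s) (hx : x ∈ Ioo (0 : ℝ) 1)
    (n : ℕ) : ‖(1 - x ^ s) * (1 - x) ^ n‖ ≤ (1 - x) ^ n := by
  have hxs : x ^ s ≤ 1 := Real.rpow_le_one hx.1.le hx.2.le hs
  have hxs' : 0 ≤ x ^ s := Real.rpow_nonneg hx.1.le s
  have h1x : 0 ≤ (1 - x) ^ n := pow_nonneg (by linarith [hx.2]) n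
  rw [Real.norm_of_nonneg (mul_nonneg (by linarith) h1x)]
  exact mul_le_of_le_one_left h1x (by linarith)

/-- The `n`-th term of the expansion of `-(1 - x ^ s) / (1 - x) * log (1 - t * (1 - x))`
in powers of `t * (1 - x)`. -/
noncomputable def logIntegrandTerm (s t : ℝ) (n : ℕ) (x : ℝ) : ℝ :=
  t ^ (n + 1) / (n + 1) * ((1 - x ^ s) * (1 - x) ^ n)

section logIntegrandTerm

variable {s t : ℝ}

lemma integrableOn_Ioo_logIntegrandTerm (hs : 0 ≤ s) (n : ℕ) :
    IntegrableOn (logIntegrandTerm s t n) (Ioo 0 1) := by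
  have := Real.continuous_rpow_const hs
  have hcont : Continuous (logIntegrandTerm s t n) := by
    unfold logIntegrandTerm
    fun_prop
  exact hcont.integrableOn_Icc.mono_set Ioo_subset_Icc_self

lemma hasSum_logIntegrandTerm (ht : |t| ≤ 1) {x : ℝ} (hx : x ∈ Ioo (0 : ℝ) 1) :
    HasSum (logIntegrandTerm s t · x)
      (-((1 - x ^ s) / (1 - x) * Real.log (1 - t * (1 - x)))) := by
  have h1x : 0 < 1 - x := by linarith [hx.2]
  have htx : |t * (1 - x)| < 1 := by
    rw [abs_mul, abs_of_pos h1x]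
    nlinarith [abs_nonneg t, hx.1]
  have hval : (1 - x ^ s) * (-Real.log (1 - t * (1 - x)) / (1 - x)) =
      -((1 - x ^ s) / (1 - x) * Real.log (1 - t * (1 - x))) := by ring
  exact hval ▸ ((hasSum_pow_div_mul_pow h1x.ne' htx).mul_left (1 - x ^ s)).congr_fun
    fun n => show logIntegrandTerm s t n x = _ by rw [logIntegrandTerm]; ring

lemma integral_logIntegrandTerm (hs : -1 < s) (n : ℕ) :
    ∫ x in Ioo (0 : ℝ) 1, logIntegrandTerm s t n x =
      t ^ (n + 1) / ((n : ℝ) + 1) ^ 2 * (1 - 1 / gbinom s (n + 1)) := by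
  rw [← integral_Ioc_eq_integral_Ioo, ← intervalIntegral.integral_of_le zero_le_one]
  simp only [logIntegrandTerm]
  rw [intervalIntegral.integral_const_mul, integral_one_sub_rpow_mul_one_sub_pow hs]
  field_simp

lemma integral_norm_logIntegrandTerm_le (hs : 0 ≤ s) (ht : |t| ≤ 1) (n : ℕ) :
    ∫ x in Ioo (0 : ℝ) 1, ‖logIntegrandTerm s t n x‖ ≤ 1 / ((n : ℝ) + 1) ^ 2 := by
  have hbound (x : ℝ) (hx : x ∈ Ioo (0 : ℝ) 1) :
      ‖logIntegrandTerm s t n x‖ ≤ (1 - x) ^ n / (n + 1) := calc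
    ‖logIntegrandTerm s t n x‖
        = |t| ^ (n + 1) * ‖(1 - x ^ s) * (1 - x) ^ n‖ / (n + 1) := by
          rw [logIntegrandTerm, norm_mul, norm_div, norm_pow, Real.norm_eq_abs,
            Real.norm_of_nonneg (by positivity : (0 : ℝ) ≤ n + 1), div_mul_eq_mul_div]
      _ ≤ 1 * (1 - x) ^ n / (n + 1) := by
          gcongr
          · exact pow_le_one₀ (abs_nonneg t) ht
          · exact norm_one_sub_rpow_mul_one_sub_pow_le hs hx n
      _ = (1 - x) ^ n / (n + 1) := by rw [one_mul]
  have hcont : Continuous fun x : ℝ => (1 - x) ^ n / ((n : ℝ) + 1) := by fun_prop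
  calc ∫ x in Ioo (0 : ℝ) 1, ‖logIntegrandTerm s t n x‖
      ≤ ∫ x in Ioo (0 : ℝ) 1, (1 - x) ^ n / ((n : ℝ) + 1) :=
        setIntegral_mono_on (integrableOn_Ioo_logIntegrandTerm hs n).norm
          (hcont.integrableOn_Icc.mono_set Ioo_subset_Icc_self) measurableSet_Ioo hbound
    _ = 1 / ((n : ℝ) + 1) ^ 2 := by
      rw [← integral_Ioc_eq_integral_Ioo, ← intervalIntegral.integral_of_le zero_le_one,
        intervalIntegral.integral_div, integral_one_sub_pow]
      field_simp

lemma hasSum_integral_div_one_sub_mul_log (hs : 0 ≤ s) (ht : |t| ≤ 1) :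
    HasSum (fun n : ℕ => t ^ (n + 1) / ((n : ℝ) + 1) ^ 2 * (1 - 1 / gbinom s (n + 1)))
      (-∫ x in (0 : ℝ)..1, (1 - x ^ s) / (1 - x) * Real.log (1 - t * (1 - x))) := by
  have hsum := hasSum_integral_of_summable_integral_norm
    (integrableOn_Ioo_logIntegrandTerm (t := t) hs)
    (summable_one_div_succ_sq.of_nonneg_of_le (fun n => integral_nonneg fun _ => norm_nonneg _)
      (integral_norm_logIntegrandTerm_le hs ht))
  rw [setIntegral_congr_fun measurableSet_Ioo fun _ hx => (hasSum_logIntegrandTerm ht hx).tsum_eq,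
    integral_neg, ← integral_Ioc_eq_integral_Ioo, ← intervalIntegral.integral_of_le zero_le_one]
    at hsum
  simpa only [integral_logIntegrandTerm (by linarith : -1 < s)] using hsum

end logIntegrandTerm

/-- For real `a` with `a ≤ -2` or `a ≥ 0` and real `s > 0`,
`∫₀¹ (1-x^s)/(1-x) log(1 - (1-x)/(1+a)) dx
  = ∑_{k=1}^∞ 1/(k²(a+1)^k C(s+k,k)) - Li₂(1/(a+1))`. -/
theorem integral_log_one_sub (a s : ℝ) (ha : a ≤ -2 ∨ 0 ≤ a) (hs : 0 < s) :
    ∫ x in (0 : ℝ)..1, (1 - x ^ s) / (1 - x) * Real.log (1 - (1 - x) / (1 + a)) =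
      (∑' k : ℕ, 1 / (((k : ℝ) + 1) ^ 2 * (a + 1) ^ (k + 1) * gbinom s (k + 1))) -
        Li2 (1 / (a + 1)) := by
  have ht := abs_one_div_add_one_le_one ha
  have hsum := (summable_pow_div_succ_sq ht).hasSum.sub
    (hasSum_integral_div_one_sub_mul_log hs.le ht)
  have hterm (k : ℕ) : 1 / (((k : ℝ) + 1) ^ 2 * (a + 1) ^ (k + 1) * gbinom s (k + 1)) =
      (1 / (a + 1)) ^ (k + 1) / ((k : ℝ) + 1) ^ 2 -
        (1 / (a + 1)) ^ (k + 1) / ((k : ℝ) + 1) ^ 2 * (1 - 1 / gbinom s (k + 1)) := by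
    simp only [one_div, mul_inv, inv_pow]
    ring
  simp only [hterm, hsum.tsum_eq, Li2, one_div_mul_eq_div, add_comm 1 a]
  ring
end

section
/- Let $k$ be a positive integer and let $x$ be a real number with $0 < |x| < 1$. Then $\sum_{j=1}^{\infty} \frac{H_j x^j}{(j+1)(j+k+1)} = \frac{1}{2xk}\Big(1 - \frac{1}{x^k}\Big)\log^2(1-x) + \frac{\log(1-x)}{k x^{k+1}} \Big( H_k - \sum_{j=1}^{k} \frac{x^j}{j} \Big) + \frac{1}{k x^{k+1}} \sum_{j=1}^{k} \frac{1}{j} \sum_{p=1}^{j} \frac{x^p}{p}$. -/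
/-!
Partial fractions split the series into `(T₀ / x - T_k / x ^ (k + 1)) / k`, where
`T_k = ∑ₙ Hₙ x ^ (n + k + 1) / (n + k + 1)`. Squaring `-log (1 - x) = ∑ₙ x ^ (n + 1) / (n + 1)` by
the Cauchy product gives `T₀ = log² (1 - x) / 2`, because `∑_{i + j = n} 1 / ((i + 1) (j + 1))`
is `2 H_{n+1} / (n + 2)`. Shifting the index and using `H_{n+1} - H_n = 1 / (n + 1)` gives
`T_k - T_{k+1} = ∑ₙ x ^ (n + k + 2) / ((n + 1) (n + k + 2))`, which partial fractions again turn
into two tails of the logarithm series; summing this recurrence gives `T_k` in closed form.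
-/

open Real Finset

lemma H_zero : H 0 = 0 := sum_range_zero _

lemma H_succ (n : ℕ) : H (n + 1) = H n + 1 / (n + 1) := sum_range_succ _ n

noncomputable def logPartialSum (x : ℝ) (m : ℕ) : ℝ := ∑ p ∈ Icc 1 m, x ^ p / p

lemma logPartialSum_zero (x : ℝ) : logPartialSum x 0 = 0 := by simp [logPartialSum]

lemma logPartialSum_succ (x : ℝ) (m : ℕ) :
    logPartialSum x (m + 1) = logPartialSum x m + x ^ (m + 1) / (m + 1) := by
  rw [logPartialSum, sum_Icc_succ_top (by omega), Nat.cast_succ, logPartialSum]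

lemma logPartialSum_eq_sum_range (x : ℝ) (m : ℕ) :
    logPartialSum x m = ∑ i ∈ range m, x ^ (i + 1) / (i + 1) := by
  induction m with
  | zero => simp [logPartialSum_zero]
  | succ m ih => rw [logPartialSum_succ, ih, sum_range_succ]

lemma summable_norm_pow_succ_div {x : ℝ} (hx : |x| < 1) :
    Summable fun n : ℕ => ‖x ^ (n + 1) / (n + 1)‖ := by
  have h := (hasSum_pow_div_log_of_abs_lt_one (x := |x|) (by rwa [abs_abs])).summable
  refine h.congr fun n => ?_
  rw [norm_div, norm_pow, Real.norm_eq_abs, Real.norm_of_nonneg (by positivity)]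

lemma hasSum_pow_div_log_tail {x : ℝ} (hx : |x| < 1) (m : ℕ) :
    HasSum (fun n : ℕ => x ^ (n + m + 1) / (n + m + 1)) (-log (1 - x) - logPartialSum x m) := by
  rw [logPartialSum_eq_sum_range]
  exact_mod_cast (hasSum_nat_add_iff' m).mpr (hasSum_pow_div_log_of_abs_lt_one hx)

lemma sum_antidiagonal_one_div_mul (n : ℕ) :
    ∑ p ∈ antidiagonal n, 1 / (((p.1 : ℝ) + 1) * (p.2 + 1)) = 2 * H (n + 1) / (n + 2) := by
  have hsplit : ∀ p ∈ antidiagonal n, 1 / (((p.1 : ℝ) + 1) * (p.2 + 1)) =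
      (1 / (p.1 + 1) + 1 / (p.2 + 1)) / (n + 2) := by
    intro p hp
    have hn : (p.1 : ℝ) + p.2 = n := by exact_mod_cast mem_antidiagonal.mp hp
    field_simp
    linarith
  have hH : ∑ p ∈ antidiagonal n, 1 / ((p.1 : ℝ) + 1) = H (n + 1) := by
    rw [Nat.sum_antidiagonal_eq_sum_range_succ_mk, H]
  have hH' : ∑ p ∈ antidiagonal n, 1 / ((p.2 : ℝ) + 1) = H (n + 1) :=
    (Nat.sum_antidiagonal_swap (f := fun p => 1 / ((p.1 : ℝ) + 1))).trans hH
  rw [sum_congr rfl hsplit, ← sum_div, sum_add_distrib, hH, hH']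
  ring

lemma hasSum_harmonic_mul_pow_div {x : ℝ} (hx : |x| < 1) :
    HasSum (fun n : ℕ => H n * x ^ (n + 1) / (n + 1)) (log (1 - x) ^ 2 / 2) := by
  have hf := summable_norm_pow_succ_div hx
  have hcauchy : HasSum (fun n : ℕ => ∑ p ∈ antidiagonal n,
      x ^ (p.1 + 1) / (p.1 + 1) * (x ^ (p.2 + 1) / (p.2 + 1))) (log (1 - x) ^ 2) := by
    refine ((summable_norm_sum_mul_antidiagonal_of_summable_norm hf hf).of_norm.hasSum_iff).mpr ?_
    rw [← tsum_mul_tsum_eq_tsum_sum_antidiagonal_of_summable_norm hf hf,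
      (hasSum_pow_div_log_of_abs_lt_one hx).tsum_eq]
    ring
  have hterm (n : ℕ) : H (n + 1) * x ^ (n + 1 + 1) / ((n + 1 : ℕ) + 1) =
      (∑ p ∈ antidiagonal n, x ^ (p.1 + 1) / (p.1 + 1) * (x ^ (p.2 + 1) / (p.2 + 1))) / 2 := by
    have hpow : ∀ p ∈ antidiagonal n, x ^ (p.1 + 1) / (p.1 + 1) * (x ^ (p.2 + 1) / (p.2 + 1)) =
        x ^ (n + 2) * (1 / (((p.1 : ℝ) + 1) * (p.2 + 1))) := by
      intro p hp
      rw [← mem_antidiagonal.mp hp]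
      field_simp
      ring
    rw [sum_congr rfl hpow, ← mul_sum, sum_antidiagonal_one_div_mul]
    push_cast
    ring
  rw [← hasSum_nat_add_iff' 1, sum_range_one, H_zero, zero_mul, zero_div, sub_zero]
  exact (hcauchy.div_const 2).congr_fun hterm

lemma hasSum_pow_div_succ_mul_add {x : ℝ} (hx : |x| < 1) (k : ℕ) :
    HasSum (fun n : ℕ => x ^ (n + k + 2) / ((n + 1) * (n + k + 2)))
      ((log (1 - x) * (1 - x ^ (k + 1)) + logPartialSum x (k + 1)) / (k + 1)) := by
  have h := (((hasSum_pow_div_log_of_abs_lt_one hx).mul_left (x ^ (k + 1))).sub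
    (hasSum_pow_div_log_tail hx (k + 1))).div_const (k + 1)
  rw [show (log (1 - x) * (1 - x ^ (k + 1)) + logPartialSum x (k + 1)) / (k + 1) =
    (x ^ (k + 1) * -log (1 - x) - (-log (1 - x) - logPartialSum x (k + 1))) / (k + 1) by ring]
  refine h.congr_fun fun n => ?_
  push_cast
  field_simp
  ring

lemma hasSum_harmonic_mul_pow_div_add {x : ℝ} (hx : |x| < 1) (k : ℕ) :
    HasSum (fun n : ℕ => H n * x ^ (n + k + 1) / (n + k + 1))
      (log (1 - x) ^ 2 / 2 - log (1 - x) * (H k - logPartialSum x k) -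
        ∑ j ∈ Icc 1 k, 1 / j * logPartialSum x j) := by
  induction k with
  | zero => simpa [H_zero, logPartialSum_zero] using hasSum_harmonic_mul_pow_div hx
  | succ k ih =>
    rw [← hasSum_nat_add_iff' 1, sum_range_one, H_zero, zero_mul, zero_div, sub_zero] at ih
    have hstep := ih.sub (hasSum_pow_div_succ_mul_add hx k)
    convert (postTransparency := .default) hstep using 1
    · funext n
      rw [H_succ]
      push_cast
      field_simp
      ring
    · rw [H_succ, sum_Icc_succ_top (by omega), logPartialSum_succ]
      push_cast
      field_simp
      ring

/-- For `k` a positive integer and real `x` with `0 < |x| < 1`,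
`∑_{j=1}^∞ H_j x^j/((j+1)(j+k+1))
  = (1/(2xk))(1 - 1/x^k) log²(1-x)
    + (log(1-x)/(k x^{k+1})) (H_k - ∑_{j=1}^k x^j/j)
    + (1/(k x^{k+1})) ∑_{j=1}^k (1/j) ∑_{p=1}^j x^p/p`. -/
theorem harmonic_series_partial_fraction (k : ℕ) (hk : 0 < k) (x : ℝ)
    (hx0 : 0 < |x|) (hx1 : |x| < 1) :
    ∑' j : ℕ, H (j + 1) * x ^ (j + 1) / (((j : ℝ) + 2) * ((j : ℝ) + (k : ℝ) + 2)) =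
      1 / (2 * x * (k : ℝ)) * (1 - 1 / x ^ k) * Real.log (1 - x) ^ 2 +
        Real.log (1 - x) / ((k : ℝ) * x ^ (k + 1)) *
          (H k - ∑ j ∈ Finset.Icc 1 k, x ^ j / (j : ℝ)) +
        1 / ((k : ℝ) * x ^ (k + 1)) *
          ∑ j ∈ Finset.Icc 1 k, (1 : ℝ) / (j : ℝ) * ∑ p ∈ Finset.Icc 1 j, x ^ p / (p : ℝ) := by
  have hx : x ≠ 0 := abs_pos.mp hx0
  have hk' : (k : ℝ) ≠ 0 := by positivity
  have hS := ((hasSum_harmonic_mul_pow_div hx1).div_const (k * x)).sub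
    ((hasSum_harmonic_mul_pow_div_add hx1 k).div_const (k * x ^ (k + 1)))
  rw [← hasSum_nat_add_iff' 1, sum_range_one, H_zero] at hS
  rw [(hS.congr_fun fun n => ?_).tsum_eq]
  · simp only [logPartialSum, zero_mul, zero_div, sub_zero]
    field_simp
    ring
  · push_cast
    field_simp
    ring
end

section
/- For every nonnegative integer $n$ and every real number $a \ge 0$, $\int_{0}^{1} \frac{1-x^n}{1-x} \log(x+a)\, dx = H_n \log(a+1) - \mathrm{Li}_2\Big(\frac{1}{a+1}\Big) + \sum_{k=1}^{\infty} \frac{1}{k^2 (a+1)^k \binom{n+k}{k}}$. -/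
/-!
For `0 < x < 1` expand `log (x + a) = log (a + 1) - ∑_{k ≥ 1} ((1 - x) / (a + 1))^k / k`.
Multiplying by `(1 - xⁿ) / (1 - x) = 1 + x + ⋯ + x^{n-1}` produces the nonnegative terms
`(1 - xⁿ) (1 - x)^{k-1} / (k (a + 1)^k)`, so the series may be integrated termwise. By the Beta
integral, `∫₀¹ (1 - xⁿ) (1 - x)^{k-1} dx = 1/k - 1/(k C(n+k, k))`: the first part sums to
`Li₂ (1 / (a + 1))`, the second to the binomial series, and the constant `log (a + 1)` integrates
against the geometric sum to `H n * log (a + 1)`.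
-/

open MeasureTheory intervalIntegral Real Set
open scoped Nat

theorem hasSum_pow_div_log_sub_log_of_abs_lt {b t : ℝ} (ht : |t| < b) :
    HasSum (fun k : ℕ => (t / b) ^ (k + 1) / (k + 1)) (log b - log (b - t)) := by
  have hb : 0 < b := (abs_nonneg t).trans_lt ht
  have hbt : 0 < b - t := by linarith [le_abs_self t]
  have hlt : |t / b| < 1 := by rwa [abs_div, abs_of_pos hb, div_lt_one hb]
  convert hasSum_pow_div_log_of_abs_lt_one hlt using 1
  rw [one_sub_div hb.ne', log_div hbt.ne' hb.ne']
  ring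

theorem integral_pow_mul_one_sub_pow (m n : ℕ) :
    ∫ x in (0 : ℝ)..1, x ^ m * (1 - x) ^ n = m ! * n ! / (m + n + 1)! := by
  induction n generalizing m with
  | zero =>
    rw [integral_congr fun x _ => by rw [pow_zero, mul_one], integral_pow, one_pow,
      zero_pow m.succ_ne_zero, sub_zero]
    push_cast [Nat.factorial_succ, Nat.factorial_zero, add_zero]
    field_simp
  | succ n ih =>
    have hsplit : ∫ x in (0 : ℝ)..1, x ^ m * (1 - x) ^ (n + 1) =
        (∫ x in (0 : ℝ)..1, x ^ m * (1 - x) ^ n) -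
          ∫ x in (0 : ℝ)..1, x ^ (m + 1) * (1 - x) ^ n := by
      rw [← intervalIntegral.integral_sub (by apply Continuous.intervalIntegrable; fun_prop)
        (by apply Continuous.intervalIntegrable; fun_prop)]
      congr 1 with x
      ring
    rw [hsplit, ih, ih, show m + 1 + n + 1 = m + n + 1 + 1 by ring,
      show m + (n + 1) + 1 = m + n + 1 + 1 by ring]
    push_cast [Nat.factorial_succ]
    field_simp
    ring

theorem integral_one_sub_pow_mul_one_sub_pow (n k : ℕ) :
    ∫ x in (0 : ℝ)..1, (1 - x ^ n) * (1 - x) ^ k =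
      1 / (k + 1) - 1 / ((k + 1) * (n + (k + 1)).choose (k + 1)) := by
  have hsplit : ∫ x in (0 : ℝ)..1, (1 - x ^ n) * (1 - x) ^ k =
      (∫ x in (0 : ℝ)..1, x ^ 0 * (1 - x) ^ k) -
        ∫ x in (0 : ℝ)..1, x ^ n * (1 - x) ^ k := by
    rw [← intervalIntegral.integral_sub (by apply Continuous.intervalIntegrable; fun_prop)
      (by apply Continuous.intervalIntegrable; fun_prop)]
    congr 1 with x
    ring
  have hchoose : ((n + (k + 1)).choose (k + 1) * n ! * (k + 1)! : ℝ) = (n + k + 1)! := by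
    exact_mod_cast Nat.add_choose_mul_factorial_mul_factorial n (k + 1)
  rw [hsplit, integral_pow_mul_one_sub_pow, integral_pow_mul_one_sub_pow, ← hchoose]
  push_cast [Nat.factorial_succ, Nat.factorial_zero, zero_add]
  field_simp

theorem integral_geom_sum (n : ℕ) :
    ∫ x in (0 : ℝ)..1, ∑ i ∈ Finset.range n, x ^ i = H n := by
  rw [integral_finsetSum fun i _ => (continuous_pow i).intervalIntegrable 0 1, H]
  simp [integral_pow]

theorem intervalIntegral.hasSum_integral_of_nonneg {ι : Type*} [Countable ι]
    {F : ι → ℝ → ℝ} {a b : ℝ} (hab : a ≤ b)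
    (hF_nonneg : ∀ i, ∀ x ∈ Ioc a b, 0 ≤ F i x)
    (hF_int : ∀ i, IntervalIntegrable (F i) volume a b)
    (hF_sum : Summable fun i => ∫ x in a..b, F i x) :
    HasSum (fun i => ∫ x in a..b, F i x) (∫ x in a..b, ∑' i, F i x) := by
  simp only [integral_of_le hab] at hF_sum ⊢
  refine hasSum_integral_of_summable_integral_norm (fun i => (hF_int i).1) ?_
  convert hF_sum using 2 with i
  exact setIntegral_congr_fun measurableSet_Ioc fun x hx => norm_of_nonneg (hF_nonneg i x hx)

theorem hasSum_Li2 {z : ℝ} (hz : |z| ≤ 1) :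
    HasSum (fun k : ℕ => z ^ (k + 1) / ((k : ℝ) + 1) ^ 2) (Li2 z) := by
  have hsq : Summable fun k : ℕ => 1 / ((k : ℝ) + 1) ^ 2 := by
    exact_mod_cast (summable_nat_add_iff 1).mpr (Real.summable_one_div_nat_pow.mpr one_lt_two)
  refine (hsq.of_norm_bounded fun k => ?_).hasSum
  simp only [norm_div, norm_pow, Real.norm_eq_abs]
  gcongr
  exacts [pow_le_one₀ (abs_nonneg z) hz, le_abs_self _]

/-- The index is shifted: this is the term `(1 - xⁿ) (1 - x)^{k-1} / (k (a + 1)^k)` above. -/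
noncomputable def logSeriesTerm (n : ℕ) (a : ℝ) (k : ℕ) (x : ℝ) : ℝ :=
  (1 - x ^ n) * (1 - x) ^ k * ((1 / (a + 1)) ^ (k + 1) / (k + 1))

section logSeriesTerm

variable (n : ℕ) {a : ℝ}

theorem hasSum_logSeriesTerm {x : ℝ} (hx : |1 - x| < a + 1) :
    HasSum (fun k => logSeriesTerm n a k x)
      ((∑ i ∈ Finset.range n, x ^ i) * (log (a + 1) - log (x + a))) := by
  have h := (hasSum_pow_div_log_sub_log_of_abs_lt hx).mul_left (∑ i ∈ Finset.range n, x ^ i)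
  rw [show a + 1 - (1 - x) = x + a by ring] at h
  refine h.congr_fun fun k => ?_
  rw [logSeriesTerm, ← geom_sum_mul_neg, div_pow (1 - x), one_div_pow]
  ring

theorem logSeriesTerm_nonneg (ha : 0 ≤ a + 1) (k : ℕ) {x : ℝ} (hx : x ∈ Icc 0 1) :
    0 ≤ logSeriesTerm n a k x := by
  have : x ^ n ≤ 1 := pow_le_one₀ hx.1 hx.2
  have : 0 ≤ 1 - x := by linarith [hx.2]
  unfold logSeriesTerm
  positivity

theorem intervalIntegrable_logSeriesTerm (k : ℕ) (b c : ℝ) :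
    IntervalIntegrable (logSeriesTerm n a k) volume b c :=
  Continuous.intervalIntegrable (by unfold logSeriesTerm; fun_prop) b c

theorem integral_logSeriesTerm (k : ℕ) :
    ∫ x in (0 : ℝ)..1, logSeriesTerm n a k x =
      (1 / (a + 1)) ^ (k + 1) / ((k : ℝ) + 1) ^ 2 -
        1 / (((k : ℝ) + 1) ^ 2 * (a + 1) ^ (k + 1) * ((n + (k + 1)).choose (k + 1) : ℝ)) := by
  have : (0 : ℝ) < (n + (k + 1)).choose (k + 1) := by exact_mod_cast Nat.choose_pos (by omega)
  simp only [logSeriesTerm]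
  rw [intervalIntegral.integral_mul_const, integral_one_sub_pow_mul_one_sub_pow, one_div_pow]
  field_simp

theorem hasSum_integral_logSeriesTerm (ha : 0 ≤ a) :
    HasSum (fun k => ∫ x in (0 : ℝ)..1, logSeriesTerm n a k x)
      (Li2 (1 / (a + 1)) - ∑' k : ℕ,
        1 / (((k : ℝ) + 1) ^ 2 * (a + 1) ^ (k + 1) * ((n + (k + 1)).choose (k + 1) : ℝ))) := by
  have hz : |1 / (a + 1)| ≤ 1 := by
    rw [abs_of_pos (by positivity), div_le_one (by linarith)]
    linarith
  have hbinomial : Summable fun k : ℕ =>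
      1 / (((k : ℝ) + 1) ^ 2 * (a + 1) ^ (k + 1) * ((n + (k + 1)).choose (k + 1) : ℝ)) := by
    refine (hasSum_Li2 hz).summable.of_nonneg_of_le (fun k => by positivity) fun k => ?_
    have := intervalIntegral.integral_nonneg (μ := volume) zero_le_one
      fun x hx => logSeriesTerm_nonneg n (a := a) (by linarith) k hx
    linarith [integral_logSeriesTerm n (a := a) k]
  simpa only [integral_logSeriesTerm] using (hasSum_Li2 hz).sub hbinomial.hasSum

theorem integral_tsum_logSeriesTerm (ha : 0 ≤ a) :
    ∫ x in (0 : ℝ)..1, ∑' k, logSeriesTerm n a k x =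
      H n * log (a + 1) - ∫ x in (0 : ℝ)..1, (1 - x ^ n) / (1 - x) * log (x + a) := by
  have hexpand : ∫ x in (0 : ℝ)..1, ∑' k, logSeriesTerm n a k x =
      ∫ x in (0 : ℝ)..1, (∑ i ∈ Finset.range n, x ^ i) * (log (a + 1) - log (x + a)) :=
    integral_congr_Ioo_of_le zero_le_one fun x ⟨hx0, hx1⟩ =>
      (hasSum_logSeriesTerm n (abs_lt.mpr ⟨by linarith, by linarith⟩)).tsum_eq
  have hquotient : ∫ x in (0 : ℝ)..1, (1 - x ^ n) / (1 - x) * log (x + a) =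
      ∫ x in (0 : ℝ)..1, (∑ i ∈ Finset.range n, x ^ i) * log (x + a) := by
    refine integral_congr_Ioo_of_le zero_le_one fun x ⟨_, hx1⟩ => ?_
    rw [geom_sum_eq hx1.ne, ← neg_div_neg_eq, neg_sub, neg_sub]
  have hlog : IntervalIntegrable (fun x => log (x + a)) volume 0 1 := by
    simpa using (intervalIntegrable_log' (a := a) (b := 1 + a)).comp_add_right a
  simp only [mul_sub] at hexpand
  rw [hexpand, hquotient,
    intervalIntegral.integral_sub (Continuous.intervalIntegrable (by fun_prop) 0 1)
      (hlog.continuousOn_mul (by fun_prop)),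
    intervalIntegral.integral_mul_const, integral_geom_sum]

end logSeriesTerm

/-- For every nonnegative integer `n` and every real `a ≥ 0`,
`∫₀¹ (1-xⁿ)/(1-x) log(x+a) dx
  = H_n log(a+1) - Li₂(1/(a+1)) + ∑_{k=1}^∞ 1/(k²(a+1)^k C(n+k,k))`. -/
theorem integral_log_eq_harmonic_sub_dilog (n : ℕ) (a : ℝ) (ha : 0 ≤ a) :
    ∫ x in (0 : ℝ)..1, (1 - x ^ n) / (1 - x) * Real.log (x + a) =
      H n * Real.log (a + 1) - Li2 (1 / (a + 1)) +
        ∑' k : ℕ,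
          1 / (((k : ℝ) + 1) ^ 2 * (a + 1) ^ (k + 1) * (Nat.choose (n + (k + 1)) (k + 1) : ℝ)) := by
  have hseries := hasSum_integral_logSeriesTerm n ha
  have hswap := hasSum_integral_of_nonneg zero_le_one
    (fun k x hx => logSeriesTerm_nonneg n (a := a) (by linarith) k (Ioc_subset_Icc_self hx))
    (fun k => intervalIntegrable_logSeriesTerm n k 0 1) hseries.summable
  rw [integral_tsum_logSeriesTerm n ha] at hswap
  linarith [hseries.unique hswap]
end

section
/- For every positive integer $n$ and every real number $a > 0$, $\int_{0}^{1} \frac{1-x^n}{1-x} \log(x+a)\, dx = H_n \log(a+1) - \sum_{k=1}^{n} \frac{(-a)^k}{k} \sum_{j=1}^{k} \frac{(-1/a)^j}{j} - \log(1 + 1/a) \sum_{k=1}^{n} \frac{(-a)^k}{k}$. -/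
open Finset Real

lemma Finset.sum_Icc_one_eq_sum_range {M : Type*} [AddCommMonoid M] (f : ℕ → M) (n : ℕ) :
    ∑ k ∈ Icc 1 n, f k = ∑ k ∈ range n, f (k + 1) := by
  rw [range_eq_Ico, sum_Ico_add', zero_add, Ico_add_one_right_eq_Icc]

lemma pow_mul_sum_Icc_inv_pow_div {K : Type*} [Field K] {c : K} (hc : c ≠ 0) (m : ℕ) :
    c ^ m * ∑ j ∈ Icc 1 m, c⁻¹ ^ j / j = ∑ i ∈ range m, c ^ (m - 1 - i) / (i + 1) := by
  rw [mul_sum, sum_Icc_one_eq_sum_range]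
  refine sum_congr rfl fun i hi => ?_
  have hi : i + 1 ≤ m := mem_range.mp hi
  rw [show m - 1 - i = m - (i + 1) by omega, pow_sub₀ c hc hi, inv_pow]
  push_cast
  ring

lemma intervalIntegral.integral_geom_sum_mul {f : ℝ → ℝ} {a b : ℝ}
    (hf : IntervalIntegrable f MeasureTheory.volume a b) (n : ℕ) :
    ∫ x in a..b, (1 - x ^ n) / (1 - x) * f x = ∑ k ∈ range n, ∫ x in a..b, x ^ k * f x := by
  rw [← intervalIntegral.integral_finsetSum
    fun k _ => hf.continuousOn_mul (continuous_pow k).continuousOn]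
  refine intervalIntegral.integral_congr_ae ?_
  filter_upwards [MeasureTheory.measure_eq_zero_iff_ae_notMem.mp (Real.volume_singleton (a := 1))]
    with x hx _
  rw [← sum_mul, geom_sum_eq hx, ← neg_div_neg_eq, neg_sub, neg_sub]

lemma add_ne_zero_of_mem_uIcc {a x : ℝ} (ha : 0 < a) (hx : x ∈ Set.uIcc (0 : ℝ) 1) :
    x + a ≠ 0 := by
  rw [Set.uIcc_of_le zero_le_one] at hx
  linarith [hx.1]

lemma continuousOn_log_add {a : ℝ} (ha : 0 < a) :
    ContinuousOn (fun x => log (x + a)) (Set.uIcc 0 1) :=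
  (continuousOn_id.add continuousOn_const).log fun _ hx => add_ne_zero_of_mem_uIcc ha hx

/-- Integration by parts against `(x ^ (k + 1) - (-a) ^ (k + 1)) / (k + 1)`, the primitive of
`x ^ k` vanishing at `-a`, so that dividing it by `x + a` leaves a polynomial. -/
noncomputable def powMulLogAddPrimitive (a : ℝ) (k : ℕ) (x : ℝ) : ℝ :=
  ((x ^ (k + 1) - (-a) ^ (k + 1)) * log (x + a) -
    ∑ i ∈ range (k + 1), (-a) ^ (k - i) * x ^ (i + 1) / (i + 1)) / (k + 1)

lemma hasDerivAt_powMulLogAddPrimitive {a x : ℝ} (hx : x + a ≠ 0) (k : ℕ) :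
    HasDerivAt (powMulLogAddPrimitive a k) (x ^ k * log (x + a)) x := by
  have hlog : HasDerivAt (fun x => log (x + a)) (x + a)⁻¹ x := by
    simpa using ((hasDerivAt_id x).add_const a).log hx
  have hsum : HasDerivAt (fun x => ∑ i ∈ range (k + 1), (-a) ^ (k - i) * x ^ (i + 1) / (i + 1))
      (∑ i ∈ range (k + 1), (-a) ^ (k - i) * ((i + 1 : ℕ) * x ^ i) / (i + 1)) x :=
    HasDerivAt.fun_sum fun i _ => ((hasDerivAt_pow (i + 1) x).const_mul _).div_const _
  have hgeom : (∑ i ∈ range (k + 1), x ^ i * (-a) ^ (k - i)) * (x + a) =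
      x ^ (k + 1) - (-a) ^ (k + 1) := by
    simpa using geom_sum₂_mul x (-a) (k + 1)
  refine (((((hasDerivAt_pow (k + 1) x).sub_const ((-a) ^ (k + 1))).mul hlog).sub hsum).div_const
    ((k : ℝ) + 1)).congr_deriv ?_
  rw [← hgeom]
  simp only [Nat.add_sub_cancel, Nat.cast_add, Nat.cast_one]
  field_simp
  rw [add_sub_assoc, ← sum_sub_distrib]
  simp [mul_comm]

lemma integral_pow_mul_log_add {a : ℝ} (ha : 0 < a) (k : ℕ) :
    ∫ x in (0 : ℝ)..1, x ^ k * log (x + a) =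
      (log (a + 1) - (-a) ^ (k + 1) * log (1 + 1 / a) -
        ∑ i ∈ range (k + 1), (-a) ^ (k - i) / (i + 1)) / (k + 1) := by
  rw [intervalIntegral.integral_eq_sub_of_hasDerivAt
    (fun x hx => hasDerivAt_powMulLogAddPrimitive (add_ne_zero_of_mem_uIcc ha hx) k)
    ((continuous_pow k).continuousOn.mul (continuousOn_log_add ha)).intervalIntegrable]
  rw [show (1 : ℝ) + 1 / a = (a + 1) / a by field_simp, log_div (by positivity) ha.ne']
  simp only [powMulLogAddPrimitive, one_pow, add_comm 1 a, mul_one, ne_eq, Nat.add_eq_zero_iff,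
    one_ne_zero, and_false, not_false_eq_true, zero_pow, zero_sub, zero_add, neg_mul, mul_zero,
    zero_div, sum_const_zero, sub_zero]
  ring

theorem integral_log_eq_finite_sums_general (n : ℕ) (a : ℝ) (ha : 0 < a) :
    ∫ x in (0 : ℝ)..1, (1 - x ^ n) / (1 - x) * Real.log (x + a) =
      H n * Real.log (a + 1) -
        (∑ k ∈ Finset.Icc 1 n, (-a) ^ k / (k : ℝ) *
          ∑ j ∈ Finset.Icc 1 k, (-1 / a) ^ j / (j : ℝ)) -
        Real.log (1 + 1 / a) * ∑ k ∈ Finset.Icc 1 n, (-a) ^ k / (k : ℝ) := by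
  rw [intervalIntegral.integral_geom_sum_mul (continuousOn_log_add ha).intervalIntegrable,
    sum_congr rfl fun k _ => integral_pow_mul_log_add ha k, H,
    sum_Icc_one_eq_sum_range, sum_Icc_one_eq_sum_range, sum_mul, mul_sum,
    ← sum_sub_distrib, ← sum_sub_distrib]
  refine sum_congr rfl fun k _ => ?_
  rw [div_mul_eq_mul_div _ _ (∑ j ∈ Icc 1 (k + 1), _),
    show -1 / a = (-a)⁻¹ by rw [neg_div, inv_neg, one_div],
    pow_mul_sum_Icc_inv_pow_div (neg_ne_zero.mpr ha.ne')]
  push_cast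
  ring

/-- For every positive integer `n` and every real `a > 0`,
`∫₀¹ (1-xⁿ)/(1-x) log(x+a) dx
  = H_n log(a+1) - ∑_{k=1}^n ((-a)^k/k) ∑_{j=1}^k ((-1/a)^j/j)
    - log(1+1/a) ∑_{k=1}^n (-a)^k/k`. -/
theorem integral_log_eq_finite_sums (n : ℕ) (hn : 0 < n) (a : ℝ) (ha : 0 < a) :
    ∫ x in (0 : ℝ)..1, (1 - x ^ n) / (1 - x) * Real.log (x + a) =
      H n * Real.log (a + 1) -
        (∑ k ∈ Finset.Icc 1 n, (-a) ^ k / (k : ℝ) *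
          ∑ j ∈ Finset.Icc 1 k, (-1 / a) ^ j / (j : ℝ)) -
        Real.log (1 + 1 / a) * ∑ k ∈ Finset.Icc 1 n, (-a) ^ k / (k : ℝ) :=
  integral_log_eq_finite_sums_general n a ha
end
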